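/- Divergence of the modulated stress–energy tensor (two dimensions). Let ε ∈ (0,1), N > 0, α, β ∈ ℝ. Let u : ℝ×ℝ² → ℂ be twice continuously differentiable, v : ℝ×ℝ² → ℝ² be continuously differentiable in the space variable, and φ : ℝ×ℝ² → ℝ. Suppose that at a point (t,x), N( α/|log ε| + iβ ) ∂_t u = Δu + ε⁻² u (1−|u|²). Then at that point, div T̃ = (Nα/|log ε|) ⟨ ∂_t u − iuNφ , ∇u − iuNv ⟩ + (β/2) N V − β N² v ⟨∂_t u, u⟩ + N² v^⊥ curl v − N j^⊥ curl v − N v^⊥ μ + N² v ( div v − (Nα/|log ε|)|u|² φ ) + N j ( (Nα/|log ε|) φ − div v ), where T̃ is the modulated stress–energy tensor built from u, v, N, ε at time t, V := 2⟨ i∂_t u, ∇u ⟩, j := ⟨ iu, ∇u ⟩, and μ := curl j. -/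

import Mathlib

open MeasureTheory Complex

noncomputable section

/-- Real inner product on `ℂ`: `⟨x, y⟩ = Re(x̄ · y)`. -/
def rinner (x y : ℂ) : ℝ := (starRingEnd ℂ x * y).re

/-- Partial derivative in the `k`-th coordinate direction. -/
def pd {n : ℕ} {E : Type*} [NormedAddCommGroup E] [NormedSpace ℝ E]
    (k : Fin n) (f : (Fin n → ℝ) → E) (x : Fin n → ℝ) : E :=
  fderiv ℝ f x (Pi.single k 1)

/-- Laplacian `Δf = Σ_k ∂²_k f`. -/
def lap {n : ℕ} (f : (Fin n → ℝ) → ℂ) (x : Fin n → ℝ) : ℂ := ∑ k, pd k (pd k f) x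

/-- Two-dimensional divergence. -/
def div2 (w : (Fin 2 → ℝ) → (Fin 2 → ℝ)) (x : Fin 2 → ℝ) : ℝ :=
  pd 0 (fun y => w y 0) x + pd 1 (fun y => w y 1) x

/-- Two-dimensional curl. -/
def curl2 (w : (Fin 2 → ℝ) → (Fin 2 → ℝ)) (x : Fin 2 → ℝ) : ℝ :=
  pd 0 (fun y => w y 1) x - pd 1 (fun y => w y 0) x

/-- Rotation by `π/2`: `X^⊥ = (−X₂, X₁)`. -/
def perp (X : Fin 2 → ℝ) : Fin 2 → ℝ := ![-(X 1), X 0]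

/-- Covariant derivative `∂_k u − iuNv_k`. -/
def covD (N : ℝ) (v : (Fin 2 → ℝ) → (Fin 2 → ℝ)) (u : (Fin 2 → ℝ) → ℂ)
    (k : Fin 2) (x : Fin 2 → ℝ) : ℂ :=
  pd k u x - Complex.I * u x * Complex.ofReal (N * v x k)

/-- Modulated stress–energy tensor entries
`T̃_{kl} = ⟨∂_k u − iuNv_k, ∂_l u − iuNv_l⟩ + N²(1−|u|²)v_kv_l
  − ½(|∇u − iuNv|² + N²(1−|u|²)|v|² + (1−|u|²)²/(2ε²)) δ_{kl}`. -/
def modStress (ε N : ℝ) (v : (Fin 2 → ℝ) → (Fin 2 → ℝ)) (u : (Fin 2 → ℝ) → ℂ)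
    (k l : Fin 2) (x : Fin 2 → ℝ) : ℝ :=
  rinner (covD N v u k x) (covD N v u l x)
    + N^2 * (1 - ‖u x‖^2) * v x k * v x l
    - (1/2) * ((∑ m, ‖covD N v u m x‖^2)
        + N^2 * (1 - ‖u x‖^2) * (∑ m, (v x m)^2)
        + (1 - ‖u x‖^2)^2 / (2*ε^2)) * (if k = l then (1:ℝ) else 0)

/-- Supercurrent `j := ⟨iu, ∇u⟩` (of `u` at fixed time). -/
def scur (u : (Fin 2 → ℝ) → ℂ) (k : Fin 2) (x : Fin 2 → ℝ) : ℝ :=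
  rinner (Complex.I * u x) (pd k u x)

section helper
variable {n : ℕ} {f g : (Fin n → ℝ) → ℝ} {x : Fin n → ℝ} {k l : Fin n}

theorem pd_add (hf : DifferentiableAt ℝ f x) (hg : DifferentiableAt ℝ g x) :
    pd k (fun y => f y + g y) x = pd k f x + pd k g x := by
  simp [pd, fderiv_fun_add hf hg]

theorem pd_sub (hf : DifferentiableAt ℝ f x) (hg : DifferentiableAt ℝ g x) :
    pd k (fun y => f y - g y) x = pd k f x - pd k g x := by
  simp [pd, fderiv_fun_sub hf hg]

theorem pd_mul (hf : DifferentiableAt ℝ f x) (hg : DifferentiableAt ℝ g x) :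
    pd k (fun y => f y * g y) x = f x * pd k g x + g x * pd k f x := by
  simp [pd, fderiv_fun_mul hf hg]

theorem pd_const_mul (hf : DifferentiableAt ℝ f x) (c : ℝ) :
    pd k (fun y => c * f y) x = c * pd k f x := by
  simp [pd, fderiv_const_mul hf c]

theorem pd_const (c : ℝ) : pd k (fun _ => c) x = 0 := by
  simp [pd]

theorem pd_re {F : (Fin n → ℝ) → ℂ} (hF : DifferentiableAt ℝ F x) :
    pd k (fun y => (F y).re) x = (pd k F x).re := by
  have h := (Complex.reCLM.hasFDerivAt.comp x hF.hasFDerivAt).fderiv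
  simp only [pd]
  rw [show (fun y => (F y).re) = Complex.reCLM ∘ F from rfl, h]
  simp

theorem pd_im {F : (Fin n → ℝ) → ℂ} (hF : DifferentiableAt ℝ F x) :
    pd k (fun y => (F y).im) x = (pd k F x).im := by
  have h := (Complex.imCLM.hasFDerivAt.comp x hF.hasFDerivAt).fderiv
  simp only [pd]
  rw [show (fun y => (F y).im) = Complex.imCLM ∘ F from rfl, h]
  simp

theorem contDiff_pd {E : Type*} [NormedAddCommGroup E] [NormedSpace ℝ E]
    {f : (Fin n → ℝ) → E} (hf : ContDiff ℝ 2 f) (k : Fin n) :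
    ContDiff ℝ 1 (fun y => pd k f y) := by
  exact (hf.fderiv_right (by norm_num)).clm_apply contDiff_const

theorem pd_pd_symm (hf : ContDiff ℝ 2 f) :
    pd l (fun y => pd k f y) x = pd k (fun y => pd l f y) x := by
  have hdf : DifferentiableAt ℝ (fderiv ℝ f) x :=
    ((hf.fderiv_right (m := 1) (by norm_num)).differentiable one_ne_zero).differentiableAt
  have h1 : ∀ (i j : Fin n), pd j (fun y => pd i f y) x
      = fderiv ℝ (fderiv ℝ f) x (Pi.single j 1) (Pi.single i 1) := by
    intro i j
    simp only [pd]
    rw [fderiv_clm_apply hdf (differentiableAt_const _)]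
    simp
  rw [h1, h1, hf.contDiffAt.isSymmSndFDerivAt (by norm_num)]
end helper

section key
variable (N r : ℝ) (a b : (Fin 2 → ℝ) → ℝ) (w : Fin 2 → (Fin 2 → ℝ) → ℝ) (x : Fin 2 → ℝ)

theorem key_off
    (haC : ContDiff ℝ 2 a) (hbC : ContDiff ℝ 2 b) (hwC : ∀ m, ContDiff ℝ 1 (w m))
    (k l : Fin 2) :
    pd l (fun y =>
        (pd k a y + N * (w k y * b y)) * (pd l a y + N * (w l y * b y))
      + (pd k b y - N * (w k y * a y)) * (pd l b y - N * (w l y * a y))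
      + N^2 * ((1 - (a y * a y + b y * b y)) * (w k y * w l y))) x
    = ((pd l (fun y => pd k a y) x + N * (pd l (w k) x * b x + w k x * pd l b x))
        * (pd l a x + N * (w l x * b x))
      + (pd k a x + N * (w k x * b x))
        * (pd l (fun y => pd l a y) x + N * (pd l (w l) x * b x + w l x * pd l b x))
      + (pd l (fun y => pd k b y) x - N * (pd l (w k) x * a x + w k x * pd l a x))
        * (pd l b x - N * (w l x * a x))
      + (pd k b x - N * (w k x * a x))
        * (pd l (fun y => pd l b y) x - N * (pd l (w l) x * a x + w l x * pd l a x))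
      + N^2 * (-(2 * (a x * pd l a x + b x * pd l b x)) * (w k x * w l x)
          + (1 - (a x * a x + b x * b x)) * (pd l (w k) x * w l x + w k x * pd l (w l) x))) := by
  have hda : DifferentiableAt ℝ a x := (haC.differentiable (by norm_num)).differentiableAt
  have hdb : DifferentiableAt ℝ b x := (hbC.differentiable (by norm_num)).differentiableAt
  have hdw : ∀ m, DifferentiableAt ℝ (w m) x := fun m =>
    ((hwC m).differentiable one_ne_zero).differentiableAt
  have hdga : ∀ m : Fin 2, DifferentiableAt ℝ (fun y => pd m a y) x := fun m =>
    ((contDiff_pd haC m).differentiable one_ne_zero).differentiableAt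
  have hdgb : ∀ m : Fin 2, DifferentiableAt ℝ (fun y => pd m b y) x := fun m =>
    ((contDiff_pd hbC m).differentiable one_ne_zero).differentiableAt
  have hdP : ∀ m : Fin 2, DifferentiableAt ℝ (fun y => pd m a y + N * (w m y * b y)) x :=
    fun m => (hdga m).fun_add (((hdw m).fun_mul hdb).const_mul N)
  have hdQ : ∀ m : Fin 2, DifferentiableAt ℝ (fun y => pd m b y - N * (w m y * a y)) x :=
    fun m => (hdgb m).fun_sub (((hdw m).fun_mul hda).const_mul N)
  have hdc1 : DifferentiableAt ℝ (fun y => 1 - (a y * a y + b y * b y)) x :=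
    (differentiableAt_const 1).fun_sub ((hda.fun_mul hda).fun_add (hdb.fun_mul hdb))
  rw [pd_add (((hdP k).fun_mul (hdP l)).fun_add ((hdQ k).fun_mul (hdQ l)))
        ((hdc1.fun_mul ((hdw k).fun_mul (hdw l))).const_mul (N^2)),
      pd_add ((hdP k).fun_mul (hdP l)) ((hdQ k).fun_mul (hdQ l)),
      pd_mul (hdP k) (hdP l), pd_mul (hdQ k) (hdQ l),
      pd_const_mul (hdc1.fun_mul ((hdw k).fun_mul (hdw l))) (N^2),
      pd_mul hdc1 ((hdw k).fun_mul (hdw l)),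
      pd_mul (hdw k) (hdw l),
      pd_sub (differentiableAt_const 1) ((hda.fun_mul hda).fun_add (hdb.fun_mul hdb)),
      pd_const, pd_add (hda.fun_mul hda) (hdb.fun_mul hdb), pd_mul hda hda, pd_mul hdb hdb,
      pd_add (hdga k) (((hdw k).fun_mul hdb).const_mul N),
      pd_add (hdga l) (((hdw l).fun_mul hdb).const_mul N),
      pd_const_mul ((hdw k).fun_mul hdb) N, pd_const_mul ((hdw l).fun_mul hdb) N,
      pd_mul (hdw k) hdb, pd_mul (hdw l) hdb,
      pd_sub (hdgb k) (((hdw k).fun_mul hda).const_mul N),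
      pd_sub (hdgb l) (((hdw l).fun_mul hda).const_mul N),
      pd_const_mul ((hdw k).fun_mul hda) N, pd_const_mul ((hdw l).fun_mul hda) N,
      pd_mul (hdw k) hda, pd_mul (hdw l) hda]
  ring
end key

section key2
variable {n : ℕ} {f g : (Fin n → ℝ) → ℝ} {x0 : Fin n → ℝ} {k : Fin n}
theorem pd_mul_const (hf : DifferentiableAt ℝ f x0) (c : ℝ) :
    pd k (fun y => f y * c) x0 = pd k f x0 * c := by
  simp [pd, fderiv_mul_const hf c]
  ring
end key2

section key3
variable (N r : ℝ) (a b : (Fin 2 → ℝ) → ℝ) (w : Fin 2 → (Fin 2 → ℝ) → ℝ) (x : Fin 2 → ℝ)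

theorem key_diag
    (haC : ContDiff ℝ 2 a) (hbC : ContDiff ℝ 2 b) (hwC : ∀ m, ContDiff ℝ 1 (w m))
    (l : Fin 2) :
    pd l (fun y =>
        (pd l a y + N * (w l y * b y)) * (pd l a y + N * (w l y * b y))
      + (pd l b y - N * (w l y * a y)) * (pd l b y - N * (w l y * a y))
      + N^2 * ((1 - (a y * a y + b y * b y)) * (w l y * w l y))
      - (1/2) * (((pd 0 a y + N * (w 0 y * b y)) * (pd 0 a y + N * (w 0 y * b y))
            + (pd 0 b y - N * (w 0 y * a y)) * (pd 0 b y - N * (w 0 y * a y))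
            + (pd 1 a y + N * (w 1 y * b y)) * (pd 1 a y + N * (w 1 y * b y))
            + (pd 1 b y - N * (w 1 y * a y)) * (pd 1 b y - N * (w 1 y * a y)))
          + N^2 * ((1 - (a y * a y + b y * b y)) * (w 0 y * w 0 y + w 1 y * w 1 y))
          + r * ((1 - (a y * a y + b y * b y)) * (1 - (a y * a y + b y * b y))) * (1/2))) x
    = ((pd l (fun y => pd l a y) x + N * (pd l (w l) x * b x + w l x * pd l b x))
        * (pd l a x + N * (w l x * b x))
      + (pd l a x + N * (w l x * b x))
        * (pd l (fun y => pd l a y) x + N * (pd l (w l) x * b x + w l x * pd l b x))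
      + (pd l (fun y => pd l b y) x - N * (pd l (w l) x * a x + w l x * pd l a x))
        * (pd l b x - N * (w l x * a x))
      + (pd l b x - N * (w l x * a x))
        * (pd l (fun y => pd l b y) x - N * (pd l (w l) x * a x + w l x * pd l a x))
      + N^2 * (-(2 * (a x * pd l a x + b x * pd l b x)) * (w l x * w l x)
          + (1 - (a x * a x + b x * b x)) * (pd l (w l) x * w l x + w l x * pd l (w l) x)))
      - (1/2) * (
          2 * ((pd 0 a x + N * (w 0 x * b x))
                * (pd l (fun y => pd 0 a y) x + N * (pd l (w 0) x * b x + w 0 x * pd l b x))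
             + (pd 0 b x - N * (w 0 x * a x))
                * (pd l (fun y => pd 0 b y) x - N * (pd l (w 0) x * a x + w 0 x * pd l a x))
             + (pd 1 a x + N * (w 1 x * b x))
                * (pd l (fun y => pd 1 a y) x + N * (pd l (w 1) x * b x + w 1 x * pd l b x))
             + (pd 1 b x - N * (w 1 x * a x))
                * (pd l (fun y => pd 1 b y) x - N * (pd l (w 1) x * a x + w 1 x * pd l a x)))
        + N^2 * (-(2 * (a x * pd l a x + b x * pd l b x)) * (w 0 x * w 0 x + w 1 x * w 1 x)
            + (1 - (a x * a x + b x * b x))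
                * (2 * (w 0 x * pd l (w 0) x + w 1 x * pd l (w 1) x)))
        + r * ((1 - (a x * a x + b x * b x)) * (-(2 * (a x * pd l a x + b x * pd l b x))))) := by
  have hda : DifferentiableAt ℝ a x := (haC.differentiable (by norm_num)).differentiableAt
  have hdb : DifferentiableAt ℝ b x := (hbC.differentiable (by norm_num)).differentiableAt
  have hdw : ∀ m, DifferentiableAt ℝ (w m) x := fun m =>
    ((hwC m).differentiable one_ne_zero).differentiableAt
  have hdga : ∀ m : Fin 2, DifferentiableAt ℝ (fun y => pd m a y) x := fun m =>
    ((contDiff_pd haC m).differentiable one_ne_zero).differentiableAt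
  have hdgb : ∀ m : Fin 2, DifferentiableAt ℝ (fun y => pd m b y) x := fun m =>
    ((contDiff_pd hbC m).differentiable one_ne_zero).differentiableAt
  have hdP : ∀ m : Fin 2, DifferentiableAt ℝ (fun y => pd m a y + N * (w m y * b y)) x :=
    fun m => (hdga m).fun_add (((hdw m).fun_mul hdb).const_mul N)
  have hdQ : ∀ m : Fin 2, DifferentiableAt ℝ (fun y => pd m b y - N * (w m y * a y)) x :=
    fun m => (hdgb m).fun_sub (((hdw m).fun_mul hda).const_mul N)
  have hdc1 : DifferentiableAt ℝ (fun y => 1 - (a y * a y + b y * b y)) x :=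
    (differentiableAt_const 1).fun_sub ((hda.fun_mul hda).fun_add (hdb.fun_mul hdb))
  have hdS : DifferentiableAt ℝ (fun y =>
      (pd 0 a y + N * (w 0 y * b y)) * (pd 0 a y + N * (w 0 y * b y))
      + (pd 0 b y - N * (w 0 y * a y)) * (pd 0 b y - N * (w 0 y * a y))
      + (pd 1 a y + N * (w 1 y * b y)) * (pd 1 a y + N * (w 1 y * b y))
      + (pd 1 b y - N * (w 1 y * a y)) * (pd 1 b y - N * (w 1 y * a y))) x :=
    ((((hdP 0).fun_mul (hdP 0)).fun_add ((hdQ 0).fun_mul (hdQ 0))).fun_add ((hdP 1).fun_mul (hdP 1))).fun_add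
      ((hdQ 1).fun_mul (hdQ 1))
  have hdW : DifferentiableAt ℝ (fun y =>
      N^2 * ((1 - (a y * a y + b y * b y)) * (w 0 y * w 0 y + w 1 y * w 1 y))) x :=
    (hdc1.fun_mul (((hdw 0).fun_mul (hdw 0)).fun_add ((hdw 1).fun_mul (hdw 1)))).const_mul (N^2)
  have hdM : DifferentiableAt ℝ (fun y =>
      r * ((1 - (a y * a y + b y * b y)) * (1 - (a y * a y + b y * b y))) * (1/2)) x :=
    ((hdc1.fun_mul hdc1).const_mul r).mul_const (1/2)
  rw [pd_sub ((((hdP l).fun_mul (hdP l)).fun_add ((hdQ l).fun_mul (hdQ l))).fun_add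
        ((hdc1.fun_mul ((hdw l).fun_mul (hdw l))).const_mul (N^2)))
        (((hdS.fun_add hdW).fun_add hdM).const_mul (1/2)),
      pd_add (((hdP l).fun_mul (hdP l)).fun_add ((hdQ l).fun_mul (hdQ l)))
        ((hdc1.fun_mul ((hdw l).fun_mul (hdw l))).const_mul (N^2)),
      pd_add ((hdP l).fun_mul (hdP l)) ((hdQ l).fun_mul (hdQ l)),
      pd_mul (hdP l) (hdP l), pd_mul (hdQ l) (hdQ l),
      pd_const_mul (hdc1.fun_mul ((hdw l).fun_mul (hdw l))) (N^2),
      pd_mul hdc1 ((hdw l).fun_mul (hdw l)),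
      pd_mul (hdw l) (hdw l),
      pd_const_mul ((hdS.fun_add hdW).fun_add hdM) (1/2),
      pd_add (hdS.fun_add hdW) hdM, pd_add hdS hdW,
      pd_add ((((hdP 0).fun_mul (hdP 0)).fun_add ((hdQ 0).fun_mul (hdQ 0))).fun_add ((hdP 1).fun_mul (hdP 1)))
        ((hdQ 1).fun_mul (hdQ 1)),
      pd_add (((hdP 0).fun_mul (hdP 0)).fun_add ((hdQ 0).fun_mul (hdQ 0))) ((hdP 1).fun_mul (hdP 1)),
      pd_add ((hdP 0).fun_mul (hdP 0)) ((hdQ 0).fun_mul (hdQ 0)),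
      pd_mul (hdP 0) (hdP 0), pd_mul (hdQ 0) (hdQ 0),
      pd_mul (hdP 1) (hdP 1), pd_mul (hdQ 1) (hdQ 1),
      pd_const_mul (hdc1.fun_mul (((hdw 0).fun_mul (hdw 0)).fun_add ((hdw 1).fun_mul (hdw 1)))) (N^2),
      pd_mul hdc1 (((hdw 0).fun_mul (hdw 0)).fun_add ((hdw 1).fun_mul (hdw 1))),
      pd_add ((hdw 0).fun_mul (hdw 0)) ((hdw 1).fun_mul (hdw 1)),
      pd_mul (hdw 0) (hdw 0), pd_mul (hdw 1) (hdw 1),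
      pd_mul_const ((hdc1.fun_mul hdc1).const_mul r) (1/2),
      pd_const_mul (hdc1.fun_mul hdc1) r, pd_mul hdc1 hdc1,
      pd_sub (differentiableAt_const 1) ((hda.fun_mul hda).fun_add (hdb.fun_mul hdb)),
      pd_const, pd_add (hda.fun_mul hda) (hdb.fun_mul hdb), pd_mul hda hda, pd_mul hdb hdb,
      pd_add (hdga l) (((hdw l).fun_mul hdb).const_mul N),
      pd_add (hdga 0) (((hdw 0).fun_mul hdb).const_mul N),
      pd_add (hdga 1) (((hdw 1).fun_mul hdb).const_mul N),
      pd_const_mul ((hdw l).fun_mul hdb) N, pd_const_mul ((hdw 0).fun_mul hdb) N,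
      pd_const_mul ((hdw 1).fun_mul hdb) N,
      pd_mul (hdw l) hdb, pd_mul (hdw 0) hdb, pd_mul (hdw 1) hdb,
      pd_sub (hdgb l) (((hdw l).fun_mul hda).const_mul N),
      pd_sub (hdgb 0) (((hdw 0).fun_mul hda).const_mul N),
      pd_sub (hdgb 1) (((hdw 1).fun_mul hda).const_mul N),
      pd_const_mul ((hdw l).fun_mul hda) N, pd_const_mul ((hdw 0).fun_mul hda) N,
      pd_const_mul ((hdw 1).fun_mul hda) N,
      pd_mul (hdw l) hda, pd_mul (hdw 0) hda, pd_mul (hdw 1) hda]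
  ring
end key3


/-- divergence of the modulated stress–energy tensor in two dimensions. -/
theorem div_modulated_stress
    (ε N α β : ℝ) (hε : ε ∈ Set.Ioo (0:ℝ) 1) (hN : 0 < N)
    (u : ℝ → (Fin 2 → ℝ) → ℂ)
    (hu : ContDiff ℝ 2 (fun p : ℝ × (Fin 2 → ℝ) => u p.1 p.2))
    (v : ℝ → (Fin 2 → ℝ) → (Fin 2 → ℝ))
    (hv : ∀ s : ℝ, ContDiff ℝ 1 (v s))
    (φ : ℝ → (Fin 2 → ℝ) → ℝ)
    (t : ℝ) (x : Fin 2 → ℝ)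
    (hpde : (N : ℂ) * (Complex.ofReal (α / (-Real.log ε)) + Complex.I * (β:ℂ)) *
          deriv (fun s => u s x) t
        = lap (u t) x
          + Complex.ofReal ((ε^2)⁻¹) * u t x * Complex.ofReal (1 - ‖u t x‖^2)) :
    ∀ k : Fin 2,
      (∑ l, pd l (fun y => modStress ε N (v t) (u t) k l y) x)
        = (N * α / (-Real.log ε)) *
            rinner (deriv (fun s => u s x) t
                      - Complex.I * u t x * Complex.ofReal (N * φ t x))
                   (covD N (v t) (u t) k x)
          + (β/2) * N * (2 * rinner (Complex.I * deriv (fun s => u s x) t) (pd k (u t) x))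
          - β * N^2 * v t x k * rinner (deriv (fun s => u s x) t) ((u t x : ℂ))
          + N^2 * perp (v t x) k * curl2 (v t) x
          - N * perp (fun m => scur (u t) m x) k * curl2 (v t) x
          - N * perp (v t x) k * curl2 (fun y m => scur (u t) m y) x
          + N^2 * v t x k *
              (div2 (v t) x - (N * α / (-Real.log ε)) * ‖u t x‖^2 * φ t x)
          + N * scur (u t) k x *
              ((N * α / (-Real.log ε)) * φ t x - div2 (v t) x) := by
  intro k
  obtain ⟨hε0, _⟩ := hε
  have hε2 : (ε:ℝ)^2 ≠ 0 := pow_ne_zero _ (ne_of_gt hε0)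
  have hf2 : ContDiff ℝ 2 (u t) :=
    hu.comp (ContDiff.prodMk (contDiff_const : ContDiff ℝ 2 fun _ : Fin 2 → ℝ => t) contDiff_id)
  have haC : ContDiff ℝ 2 (fun z => (u t z).re) := Complex.reCLM.contDiff.comp hf2
  have hbC : ContDiff ℝ 2 (fun z => (u t z).im) := Complex.imCLM.contDiff.comp hf2
  have hwC : ∀ m : Fin 2, ContDiff ℝ 1 (fun y => v t y m) := fun m => by
    exact (ContinuousLinearMap.proj m : (∀ _ : Fin 2, ℝ) →L[ℝ] ℝ).contDiff.comp (hv t)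
  have hdu : ∀ y, DifferentiableAt ℝ (u t) y := fun y =>
    (hf2.differentiable two_ne_zero).differentiableAt
  have hda : ∀ y, DifferentiableAt ℝ (fun z => (u t z).re) y := fun y =>
    (haC.differentiable two_ne_zero).differentiableAt
  have hdb : ∀ y, DifferentiableAt ℝ (fun z => (u t z).im) y := fun y =>
    (hbC.differentiable two_ne_zero).differentiableAt
  have hdga : ∀ (m : Fin 2) y, DifferentiableAt ℝ (fun z => pd m (fun z' => (u t z').re) z) y :=
    fun m y => ((contDiff_pd haC m).differentiable one_ne_zero).differentiableAt
  have hdgb : ∀ (m : Fin 2) y, DifferentiableAt ℝ (fun z => pd m (fun z' => (u t z').im) z) y :=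
    fun m y => ((contDiff_pd hbC m).differentiable one_ne_zero).differentiableAt
  have hdpdu : ∀ m : Fin 2, DifferentiableAt ℝ (pd m (u t)) x := fun m =>
    ((contDiff_pd hf2 m).differentiable one_ne_zero).differentiableAt
  have hx_re : ∀ (m : Fin 2) (y : Fin 2 → ℝ),
      (pd m (u t) y).re = pd m (fun z => (u t z).re) y := fun m y => (pd_re (hdu y)).symm
  have hx_im : ∀ (m : Fin 2) (y : Fin 2 → ℝ),
      (pd m (u t) y).im = pd m (fun z => (u t z).im) y := fun m y => (pd_im (hdu y)).symm
  have hsq : ∀ z : ℂ, ‖z‖^2 = z.re * z.re + z.im * z.im := by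
    intro z
    rw [Complex.sq_norm, Complex.normSq_apply]
  have hptd : ∀ (l : Fin 2) (y : Fin 2 → ℝ), modStress ε N (v t) (u t) l l y
      = (pd l (fun z => (u t z).re) y + N * (v t y l * (u t y).im)) * (pd l (fun z => (u t z).re) y + N * (v t y l * (u t y).im))
      + (pd l (fun z => (u t z).im) y - N * (v t y l * (u t y).re)) * (pd l (fun z => (u t z).im) y - N * (v t y l * (u t y).re))
      + N^2 * ((1 - ((u t y).re * (u t y).re + (u t y).im * (u t y).im)) * (v t y l * v t y l))
      - (1/2) * (((pd 0 (fun z => (u t z).re) y + N * (v t y 0 * (u t y).im)) * (pd 0 (fun z => (u t z).re) y + N * (v t y 0 * (u t y).im))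
            + (pd 0 (fun z => (u t z).im) y - N * (v t y 0 * (u t y).re)) * (pd 0 (fun z => (u t z).im) y - N * (v t y 0 * (u t y).re))
            + (pd 1 (fun z => (u t z).re) y + N * (v t y 1 * (u t y).im)) * (pd 1 (fun z => (u t z).re) y + N * (v t y 1 * (u t y).im))
            + (pd 1 (fun z => (u t z).im) y - N * (v t y 1 * (u t y).re)) * (pd 1 (fun z => (u t z).im) y - N * (v t y 1 * (u t y).re)))
          + N^2 * ((1 - ((u t y).re * (u t y).re + (u t y).im * (u t y).im)) * (v t y 0 * v t y 0 + v t y 1 * v t y 1))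
          + (ε^2)⁻¹ * ((1 - ((u t y).re * (u t y).re + (u t y).im * (u t y).im)) * (1 - ((u t y).re * (u t y).re + (u t y).im * (u t y).im))) * (1/2)) := by
    intro l y
    simp only [modStress, rinner, covD, Fin.sum_univ_two, hsq, if_pos rfl, if_true,
      Complex.sub_re, Complex.sub_im, Complex.mul_re, Complex.mul_im,
      Complex.I_re, Complex.I_im, Complex.ofReal_re, Complex.ofReal_im,
      Complex.conj_re, Complex.conj_im, map_sub, hx_re, hx_im]
    field_simp
    ring
  have hpto : ∀ (kk ll : Fin 2), kk ≠ ll → ∀ y : Fin 2 → ℝ,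
      modStress ε N (v t) (u t) kk ll y = (pd kk (fun z => (u t z).re) y + N * (v t y kk * (u t y).im)) * (pd ll (fun z => (u t z).re) y + N * (v t y ll * (u t y).im))
      + (pd kk (fun z => (u t z).im) y - N * (v t y kk * (u t y).re)) * (pd ll (fun z => (u t z).im) y - N * (v t y ll * (u t y).re))
      + N^2 * ((1 - ((u t y).re * (u t y).re + (u t y).im * (u t y).im)) * (v t y kk * v t y ll)) := by
    intro kk ll hne y
    simp only [modStress, rinner, covD, Fin.sum_univ_two, hsq, if_neg hne,
      Complex.sub_re, Complex.sub_im, Complex.mul_re, Complex.mul_im,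
      Complex.I_re, Complex.I_im, Complex.ofReal_re, Complex.ofReal_im,
      Complex.conj_re, Complex.conj_im, map_sub, hx_re, hx_im, mul_zero]
    ring
  have hscur : ∀ (m : Fin 2) (y : Fin 2 → ℝ), scur (u t) m y
      = (u t y).re * pd m (fun z => (u t z).im) y - (u t y).im * pd m (fun z => (u t z).re) y := by
    intro m y
    simp only [scur, rinner, Complex.mul_re, Complex.mul_im, Complex.I_re, Complex.I_im,
      Complex.conj_re, Complex.conj_im, map_mul, hx_re, hx_im]
    ring
  have hpdscur : ∀ (m' m : Fin 2), pd m' (fun y => (u t y).re * pd m (fun z => (u t z).im) y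
          - (u t y).im * pd m (fun z => (u t z).re) y) x
      = ((u t x).re * pd m' (fun y => pd m (fun z => (u t z).im) y) x
          + pd m (fun z => (u t z).im) x * pd m' (fun z => (u t z).re) x)
        - ((u t x).im * pd m' (fun y => pd m (fun z => (u t z).re) y) x
          + pd m (fun z => (u t z).re) x * pd m' (fun z => (u t z).im) x) := by
    intro m' m
    rw [pd_sub ((hda x).fun_mul (hdgb m x)) ((hdb x).fun_mul (hdga m x)),
        pd_mul (hda x) (hdgb m x), pd_mul (hdb x) (hdga m x)]
  have h2 : ∀ m : Fin 2, (pd m (pd m (u t)) x).re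
      = pd m (fun y => pd m (fun z => (u t z).re) y) x := by
    intro m
    rw [← funext (hx_re m)]
    exact (pd_re (hdpdu m)).symm
  have h3 : ∀ m : Fin 2, (pd m (pd m (u t)) x).im
      = pd m (fun y => pd m (fun z => (u t z).im) y) x := by
    intro m
    rw [← funext (hx_im m)]
    exact (pd_im (hdpdu m)).symm
  have hre : N * ((α / (-Real.log ε)) * (deriv (fun s => u s x) t).re
        - β * (deriv (fun s => u s x) t).im)
      = (pd 0 (fun y => pd 0 (fun z => (u t z).re) y) x
          + pd 1 (fun y => pd 1 (fun z => (u t z).re) y) x)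
        + (ε^2)⁻¹ * ((u t x).re
            * (1 - ((u t x).re * (u t x).re + (u t x).im * (u t x).im))) := by
    have h := congrArg Complex.re hpde
    simp only [lap, Fin.sum_univ_two, Complex.add_re, Complex.add_im, Complex.mul_re,
      Complex.mul_im, Complex.ofReal_re, Complex.ofReal_im, Complex.I_re, Complex.I_im,
      hsq, h2, h3] at h
    linear_combination h
  have him : N * ((α / (-Real.log ε)) * (deriv (fun s => u s x) t).im
        + β * (deriv (fun s => u s x) t).re)
      = (pd 0 (fun y => pd 0 (fun z => (u t z).im) y) x
          + pd 1 (fun y => pd 1 (fun z => (u t z).im) y) x)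
        + (ε^2)⁻¹ * ((u t x).im
            * (1 - ((u t x).re * (u t x).re + (u t x).im * (u t x).im))) := by
    have h := congrArg Complex.im hpde
    simp only [lap, Fin.sum_univ_two, Complex.add_re, Complex.add_im, Complex.mul_re,
      Complex.mul_im, Complex.ofReal_re, Complex.ofReal_im, Complex.I_re, Complex.I_im,
      hsq, h2, h3] at h
    linear_combination h
  have hsa : pd 1 (fun y => pd 0 (fun z => (u t z).re) y) x
      = pd 0 (fun y => pd 1 (fun z => (u t z).re) y) x := pd_pd_symm haC
  have hsb : pd 1 (fun y => pd 0 (fun z => (u t z).im) y) x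
      = pd 0 (fun y => pd 1 (fun z => (u t z).im) y) x := pd_pd_symm hbC
  rcases show k = 0 ∨ k = 1 by omega with rfl | rfl
  · simp only [Fin.sum_univ_two, Fin.isValue]
    rw [funext (hptd 0), funext (hpto 0 1 (by decide))]
    rw [key_diag N ((ε^2)⁻¹) (fun z => (u t z).re) (fun z => (u t z).im)
          (fun m y => v t y m) x haC hbC hwC 0,
        key_off N (fun z => (u t z).re) (fun z => (u t z).im)
          (fun m y => v t y m) x haC hbC hwC 0 1]
    simp only [curl2, div2, perp, Matrix.cons_val_zero, Matrix.cons_val_one, Matrix.head_cons,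
      rinner, covD, hsq, Complex.sub_re, Complex.sub_im, Complex.mul_re, Complex.mul_im,
      Complex.I_re, Complex.I_im, Complex.ofReal_re, Complex.ofReal_im,
      Complex.conj_re, Complex.conj_im, map_sub, hx_re, hx_im, hscur, hpdscur, hsa, hsb]
    linear_combination
      (-(pd 0 (fun z => (u t z).re) x + N * (v t x 0 * (u t x).im))) * hre
      + (-(pd 0 (fun z => (u t z).im) x - N * (v t x 0 * (u t x).re))) * him
  · simp only [Fin.sum_univ_two, Fin.isValue]
    rw [funext (hptd 1), funext (hpto 1 0 (by decide))]
    rw [key_diag N ((ε^2)⁻¹) (fun z => (u t z).re) (fun z => (u t z).im)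
          (fun m y => v t y m) x haC hbC hwC 1,
        key_off N (fun z => (u t z).re) (fun z => (u t z).im)
          (fun m y => v t y m) x haC hbC hwC 1 0]
    simp only [curl2, div2, perp, Matrix.cons_val_zero, Matrix.cons_val_one, Matrix.head_cons,
      rinner, covD, hsq, Complex.sub_re, Complex.sub_im, Complex.mul_re, Complex.mul_im,
      Complex.I_re, Complex.I_im, Complex.ofReal_re, Complex.ofReal_im,
      Complex.conj_re, Complex.conj_im, map_sub, hx_re, hx_im, hscur, hpdscur, hsa, hsb]
    linear_combination
      (-(pd 1 (fun z => (u t z).re) x + N * (v t x 1 * (u t x).im))) * hre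
      + (-(pd 1 (fun z => (u t z).im) x - N * (v t x 1 * (u t x).re))) * him
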